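/- Let H be a triangle-free finite simple graph with vertex set {1,…,N} and m edges, and suppose the edge set of H is partitioned into k (possibly empty) parts C_1, …, C_k with total cost Z = Σ_{i=1}^k cost(C_i). Then H has a vertex cover of size at most 4k + 3Z − 3m. -/

import Mathlib

open SimpleGraph Finset

/-- For a graph on vertex set `Fin N`, the edge `e = {i, j}` is identified with the
point `x_e = b_i + b_j` in `ℝ^N`, where `b_i` is the `i`-th standard basis vector. -/
noncomputable def edgePoint (N : ℕ) (e : Sym2 (Fin N)) : EuclideanSpace ℝ (Fin N) :=
  Sym2.lift ⟨fun i j => EuclideanSpace.single i (1 : ℝ) + EuclideanSpace.single j (1 : ℝ),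
    fun _ _ => add_comm _ _⟩ e

/-- The (k-means) cost of a finite set `C` of edges:
`cost(C) = inf_{c ∈ ℝ^N} Σ_{e ∈ C} ‖x_e − c‖²`. -/
noncomputable def cost (N : ℕ) (C : Finset (Sym2 (Fin N))) : ℝ :=
  ⨅ c : EuclideanSpace ℝ (Fin N), ∑ e ∈ C, ‖edgePoint N e - c‖ ^ 2

/-- A set `S` of vertices is a vertex cover of `H` if every edge of `H` has at
least one endpoint in `S`. -/
def IsVertexCover {W : Type*} (H : SimpleGraph W) (S : Set W) : Prop :=
  ∀ ⦃u v : W⦄, H.Adj u v → u ∈ S ∨ v ∈ S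

/-! For a part `C` with `m` edges and degrees `d_v` (counted inside `C`), the points `x_e`
have squared norm `2` and sum to the degree vector `(d_v)_v`, so expanding around the centroid
gives `m · cost(C) ≥ 2m² - Σ d_v²`. It therefore suffices to cover each part by a set `S` with
`m |S| + 3 Σ d_v² ≤ 3m² + 4m`, and to take the union of these covers.

If `C` is a matching, one endpoint per edge will do. Otherwise pick a vertex `v₀` of degree
`Δ ≥ 2`, cover the edges avoiding `v₀` by induction and add `v₀`. Removing the star of `v₀`
changes `Σ d_v²` by at most `Δ(Δ + 1)` plus twice a cross term, and triangle-freeness bounds the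
cross term by the number of remaining edges: an edge avoiding `v₀` has at most one endpoint
adjacent to `v₀`. -/

section EdgeDegree

variable {V : Type*} [DecidableEq V]

def edgeDegree (E : Finset (Sym2 V)) (v : V) : ℕ := #{e ∈ E | v ∈ e}

theorem sum_edgeDegree_mul [Fintype V] (E : Finset (Sym2 V)) (g : V → ℕ) :
    ∑ v, edgeDegree E v * g v = ∑ e ∈ E, ∑ v ∈ e.toFinset, g v := by
  simp only [edgeDegree, ← smul_eq_mul, ← sum_const]
  exact sum_comm' (by simp [Sym2.mem_toFinset, and_comm])

theorem sum_edgeDegree_le [Fintype V] (E : Finset (Sym2 V)) :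
    ∑ v, edgeDegree E v ≤ 2 * #E := by
  have h := sum_edgeDegree_mul E 1
  simp only [Pi.one_apply, mul_one, sum_const, smul_eq_mul] at h
  rw [h, mul_comm]
  exact sum_le_card_nsmul _ _ _ fun e _ => by rw [Sym2.card_toFinset]; split_ifs <;> omega

theorem edgeDegree_add_edgeDegree_le (E : Finset (Sym2 V)) {a b : V} (hab : a ≠ b) :
    edgeDegree E a + edgeDegree E b ≤ #E + 1 := by
  rw [edgeDegree, edgeDegree, ← card_union_add_card_inter]
  gcongr
  · exact union_subset (filter_subset _ _) (filter_subset _ _)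
  · refine card_le_one.2 fun e he f hf => ?_
    simp only [mem_inter, mem_filter] at he hf
    exact ((Sym2.mem_and_mem_iff hab).1 ⟨he.1.2, he.2.2⟩).trans
      ((Sym2.mem_and_mem_iff hab).1 ⟨hf.1.2, hf.2.2⟩).symm

theorem sum_sq_edgeDegree_le [Fintype V] (E : Finset (Sym2 V)) (hE : ∀ e ∈ E, ¬ e.IsDiag) :
    ∑ v, edgeDegree E v ^ 2 ≤ #E * (#E + 1) := by
  simp only [sq, sum_edgeDegree_mul]
  refine (sum_le_card_nsmul _ _ _ fun e he => ?_).trans_eq (smul_eq_mul _ _)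
  induction e using Sym2.ind with
  | _ a b =>
    have hab : a ≠ b := by simpa using hE _ he
    rw [Sym2.toFinset_mk_eq, sum_pair hab]
    exact edgeDegree_add_edgeDegree_le E hab

theorem edgeDegree_filter_add_edgeDegree_filter_not (E : Finset (Sym2 V)) (p : Sym2 V → Prop)
    [DecidablePred p] (v : V) :
    edgeDegree {e ∈ E | p e} v + edgeDegree {e ∈ E | ¬ p e} v = edgeDegree E v := by
  simp only [edgeDegree]
  rw [filter_comm, filter_comm (p := fun e => ¬ p e), card_filter_add_card_filter_not]

theorem exists_cover_card_le (E : Finset (Sym2 V)) :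
    ∃ S : Finset V, (∀ e ∈ E, ∃ v ∈ S, v ∈ e) ∧ #S ≤ #E :=
  ⟨E.image fun e => e.out.1, fun e he => ⟨_, mem_image_of_mem _ he, Sym2.out_fst_mem e⟩,
    card_image_le⟩

end EdgeDegree

section TriangleFree

variable {V : Type*} [Fintype V] [DecidableEq V] {G : SimpleGraph V} [DecidableRel G.Adj]

theorem sum_edgeDegree_filter_adj_le (hG : G.CliqueFree 3) {F : Finset (Sym2 V)}
    (hF : (F : Set (Sym2 V)) ⊆ G.edgeSet) (v₀ : V) :
    ∑ v with G.Adj v₀ v, edgeDegree F v ≤ #F := by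
  have h := sum_edgeDegree_mul F fun v => if G.Adj v₀ v then 1 else 0
  simp only [mul_ite, mul_one, mul_zero] at h
  rw [sum_filter, h]
  refine (sum_le_card_nsmul F _ 1 fun f hf => ?_).trans_eq (by simp)
  induction f using Sym2.ind with
  | _ a b =>
    have hab : G.Adj a b := hF hf
    rw [Sym2.toFinset_mk_eq, sum_pair hab.ne]
    have : ¬ (G.Adj v₀ a ∧ G.Adj v₀ b) := fun h =>
      hG {v₀, a, b} (is3Clique_triple_iff.2 ⟨h.1, h.2, hab⟩)
    split_ifs <;> simp_all

theorem sum_sq_edgeDegree_le_of_cliqueFree (hG : G.CliqueFree 3) {E : Finset (Sym2 V)}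
    (hE : (E : Set (Sym2 V)) ⊆ G.edgeSet) (v₀ : V) :
    ∑ v, edgeDegree E v ^ 2 ≤ ∑ v, edgeDegree {e ∈ E | v₀ ∉ e} v ^ 2 +
      2 * #{e ∈ E | v₀ ∉ e} + edgeDegree E v₀ * (edgeDegree E v₀ + 1) := by
  set F := {e ∈ E | v₀ ∉ e}
  set star := {e ∈ E | v₀ ∈ e}
  have hcross : ∀ v, edgeDegree F v * edgeDegree star v ≤
      if G.Adj v₀ v then edgeDegree F v else 0 := by
    intro v
    by_cases hv : v = v₀
    · have : edgeDegree F v = 0 := by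
        simp [edgeDegree, F, filter_filter, hv]
      simp [this]
    have hmem : ∀ e ∈ {e ∈ star | v ∈ e}, e = s(v₀, v) := fun e he => by
      simp only [star, filter_filter, mem_filter] at he
      exact (Sym2.mem_and_mem_iff (Ne.symm hv)).1 he.2
    split_ifs with hadj
    · exact (Nat.mul_le_mul_left _ (card_le_one.2 fun e he f hf =>
        (hmem e he).trans (hmem f hf).symm)).trans_eq (mul_one _)
    · have : edgeDegree star v = 0 := card_eq_zero.2 <| eq_empty_of_forall_notMem fun e he =>
        hadj (hE (hmem e he ▸ (mem_filter.1 (mem_filter.1 he).1).1))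
      simp [this]
  have hstar : ∀ e ∈ star, ¬ e.IsDiag := fun e he =>
    G.not_isDiag_of_mem_edgeSet (hE (mem_filter.1 he).1)
  calc ∑ v, edgeDegree E v ^ 2
      = ∑ v, edgeDegree F v ^ 2 + 2 * ∑ v, edgeDegree F v * edgeDegree star v +
          ∑ v, edgeDegree star v ^ 2 := by
        simp only [← edgeDegree_filter_add_edgeDegree_filter_not E (v₀ ∈ ·), mul_sum,
          ← sum_add_distrib]
        exact sum_congr rfl fun v _ => by ring
    _ ≤ ∑ v, edgeDegree F v ^ 2 + 2 * #F + #star * (#star + 1) := by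
        gcongr
        · calc ∑ v, edgeDegree F v * edgeDegree star v
              ≤ ∑ v, if G.Adj v₀ v then edgeDegree F v else 0 := sum_le_sum fun v _ => hcross v
            _ ≤ #F := by
              rw [← sum_filter]
              exact sum_edgeDegree_filter_adj_le hG (fun e he => hE (mem_filter.1 he).1) v₀
        · exact sum_sq_edgeDegree_le star hstar

theorem exists_cover_card_mul_add_three_sum_sq_le (hG : G.CliqueFree 3) (E : Finset (Sym2 V))
    (hE : (E : Set (Sym2 V)) ⊆ G.edgeSet) :
    ∃ S : Finset V, (∀ e ∈ E, ∃ v ∈ S, v ∈ e) ∧ #S ≤ #E ∧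
      #E * #S + 3 * ∑ v, edgeDegree E v ^ 2 ≤ 3 * #E ^ 2 + 4 * #E := by
  induction E using Finset.strongInduction with
  | H E ih =>
  by_cases hmatching : ∀ v, edgeDegree E v ≤ 1
  · obtain ⟨S, hcover, hS⟩ := exists_cover_card_le E
    have hsq : ∑ v, edgeDegree E v ^ 2 ≤ 2 * #E :=
      (sum_le_sum fun v _ => by nlinarith [hmatching v]).trans (sum_edgeDegree_le E)
    exact ⟨S, hcover, hS, by nlinarith [Nat.mul_le_mul_left #E hS]⟩
  push Not at hmatching
  obtain ⟨v₀, hv₀⟩ := hmatching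
  set F := {e ∈ E | v₀ ∉ e}
  set Δ := edgeDegree E v₀
  have hFE : F ⊂ E := by
    obtain ⟨e, he⟩ := card_pos.1 (show 0 < Δ by omega)
    exact filter_ssubset.2 ⟨e, (mem_filter.1 he).1, not_not.2 (mem_filter.1 he).2⟩
  have hcard : Δ + #F = #E := card_filter_add_card_filter_not _
  obtain ⟨SF, hcoverF, hSF, hF⟩ := ih F hFE fun e he => hE (mem_filter.1 he).1
  have hS : #(insert v₀ SF) ≤ #SF + 1 := card_insert_le _ _
  refine ⟨insert v₀ SF, fun e he => ?_, by omega, ?_⟩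
  · by_cases hv : v₀ ∈ e
    · exact ⟨v₀, mem_insert_self _ _, hv⟩
    · obtain ⟨w, hw, hwe⟩ := hcoverF e (mem_filter.2 ⟨he, hv⟩)
      exact ⟨w, mem_insert_of_mem hw, hwe⟩
  · have hsq := sum_sq_edgeDegree_le_of_cliqueFree hG hE v₀
    -- what remains is `Δ |SF| + 7 |F| ≤ 6 Δ |F|`, which is where `Δ ≥ 2` is needed
    nlinarith [Nat.mul_le_mul_left #E hS, Nat.mul_le_mul_left Δ hSF,
      Nat.mul_le_mul_right #F hv₀]

end TriangleFree

theorem card_mul_sum_norm_sq_sub_norm_sum_sq_le {ι F : Type*} [NormedAddCommGroup F]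
    [InnerProductSpace ℝ F] (s : Finset ι) (x : ι → F) (c : F) :
    #s * ∑ i ∈ s, ‖x i‖ ^ 2 - ‖∑ i ∈ s, x i‖ ^ 2 ≤ #s * ∑ i ∈ s, ‖x i - c‖ ^ 2 := by
  have hsum : ∑ i ∈ s, ‖x i - c‖ ^ 2 =
      ∑ i ∈ s, ‖x i‖ ^ 2 - 2 * inner ℝ (∑ i ∈ s, x i) c + #s * ‖c‖ ^ 2 := by
    simp only [norm_sub_sq_real, sum_add_distrib, sum_sub_distrib, sum_inner, mul_sum,
      sum_const, nsmul_eq_mul]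
  have hdev := norm_sub_sq_real (∑ i ∈ s, x i) ((#s : ℝ) • c)
  rw [inner_smul_right, norm_smul, Real.norm_natCast, mul_pow] at hdev
  nlinarith [sq_nonneg ‖∑ i ∈ s, x i - (#s : ℝ) • c‖]

section EdgePoint

variable {N : ℕ}

theorem edgePoint_apply {e : Sym2 (Fin N)} (he : ¬ e.IsDiag) (v : Fin N) :
    edgePoint N e v = if v ∈ e then 1 else 0 := by
  induction e using Sym2.ind with
  | _ i j =>
    have hij : i ≠ j := by simpa using he
    simp only [edgePoint, Sym2.lift_mk, PiLp.add_apply, PiLp.single_apply,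
      Sym2.mem_iff]
    by_cases hi : v = i <;> by_cases hj : v = j <;> simp_all

theorem norm_edgePoint_sq {e : Sym2 (Fin N)} (he : ¬ e.IsDiag) : ‖edgePoint N e‖ ^ 2 = 2 := by
  have hfilter : ({v | v ∈ e} : Finset (Fin N)) = e.toFinset := by ext; simp [Sym2.mem_toFinset]
  simp only [EuclideanSpace.real_norm_sq_eq, edgePoint_apply he, ite_pow, one_pow,
    zero_pow two_ne_zero, sum_boole, hfilter, Sym2.card_toFinset_of_not_isDiag e he]
  norm_num

theorem norm_sum_edgePoint_sq {C : Finset (Sym2 (Fin N))} (hC : ∀ e ∈ C, ¬ e.IsDiag) :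
    ‖∑ e ∈ C, edgePoint N e‖ ^ 2 = ∑ v, (edgeDegree C v : ℝ) ^ 2 := by
  simp only [EuclideanSpace.real_norm_sq_eq, WithLp.ofLp_sum, Finset.sum_apply]
  refine sum_congr rfl fun v _ => ?_
  rw [sum_congr rfl fun e he => edgePoint_apply (hC e he) v, sum_boole, edgeDegree]

theorem cost_nonneg (C : Finset (Sym2 (Fin N))) : 0 ≤ cost N C :=
  Real.iInf_nonneg fun _ => sum_nonneg fun _ _ => sq_nonneg _

theorem two_mul_card_sq_sub_le_card_mul_cost {C : Finset (Sym2 (Fin N))}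
    (hC : ∀ e ∈ C, ¬ e.IsDiag) :
    2 * (#C : ℝ) ^ 2 - ∑ v, (edgeDegree C v : ℝ) ^ 2 ≤ #C * cost N C := by
  rw [cost, Real.mul_iInf_of_nonneg (Nat.cast_nonneg _)]
  refine le_ciInf fun c => le_of_eq_of_le ?_
    (card_mul_sum_norm_sq_sub_norm_sum_sq_le C (edgePoint N) c)
  rw [sum_congr rfl fun e he => norm_edgePoint_sq (hC e he), norm_sum_edgePoint_sq hC,
    sum_const, nsmul_eq_mul]
  ring

end EdgePoint

theorem exists_cover_card_le_cost {N : ℕ} {G : SimpleGraph (Fin N)} [DecidableRel G.Adj]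
    (hG : G.CliqueFree 3) {C : Finset (Sym2 (Fin N))} (hC : (C : Set (Sym2 (Fin N))) ⊆ G.edgeSet) :
    ∃ S : Finset (Fin N), (∀ e ∈ C, ∃ v ∈ S, v ∈ e) ∧
      (#S : ℝ) ≤ 4 + 3 * cost N C - 3 * #C := by
  obtain ⟨S, hcover, hSC, hS⟩ := exists_cover_card_mul_add_three_sum_sq_le hG C hC
  refine ⟨S, hcover, ?_⟩
  have hcost := two_mul_card_sq_sub_le_card_mul_cost fun e he =>
    G.not_isDiag_of_mem_edgeSet (hC he)
  have hS' : (#C : ℝ) * #S + 3 * ∑ v, (edgeDegree C v : ℝ) ^ 2 ≤ 3 * #C ^ 2 + 4 * #C := by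
    exact_mod_cast hS
  rcases (#C).eq_zero_or_pos with h0 | hpos
  · have : #S = 0 := by omega
    simp only [this, h0, Nat.cast_zero]
    linarith [cost_nonneg (N := N) C]
  · have hpos' : (0 : ℝ) < #C := by exact_mod_cast hpos
    refine le_of_mul_le_mul_left ?_ hpos'
    nlinarith

theorem statement12_general {N : ℕ} (H : SimpleGraph (Fin N)) [DecidableRel H.Adj]
    (htf : H.CliqueFree 3) (m : ℕ) (hm : H.edgeFinset.card = m)
    (k : ℕ) (CC : Fin k → Finset (Sym2 (Fin N)))
    (hpart : ∀ e, e ∈ H.edgeFinset ↔ ∃ i, e ∈ CC i)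
    (Z : ℝ) (hZ : Z = ∑ i, cost N (CC i)) :
    ∃ S : Finset (Fin N), _root_.IsVertexCover H ↑S ∧
      (S.card : ℝ) ≤ 4 * k + 3 * Z - 3 * m := by
  have hCC : ∀ i, (CC i : Set (Sym2 (Fin N))) ⊆ H.edgeSet := fun i e he =>
    mem_edgeFinset.1 ((hpart e).2 ⟨i, he⟩)
  choose S hcover hS using fun i => exists_cover_card_le_cost htf (hCC i)
  refine ⟨univ.biUnion S, fun u v huv => ?_, ?_⟩
  · obtain ⟨i, hi⟩ := (hpart s(u, v)).1 (mem_edgeFinset.2 huv)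
    obtain ⟨w, hw, hwe⟩ := hcover i _ hi
    have hw' : w ∈ univ.biUnion S := mem_biUnion.2 ⟨i, mem_univ i, hw⟩
    rcases Sym2.mem_iff.1 hwe with rfl | rfl
    exacts [Or.inl hw', Or.inr hw']
  · have hedges : H.edgeFinset = univ.biUnion CC := by
      ext e
      simpa using hpart e
    have hm' : (m : ℝ) ≤ ∑ i, (#(CC i) : ℝ) := by
      rw [← hm, hedges]
      exact_mod_cast card_biUnion_le
    calc (#(univ.biUnion S) : ℝ) ≤ ∑ i, (#(S i) : ℝ) := by exact_mod_cast card_biUnion_le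
      _ ≤ ∑ i, (4 + 3 * cost N (CC i) - 3 * #(CC i)) := sum_le_sum fun i _ => hS i
      _ ≤ 4 * k + 3 * Z - 3 * m := by
        simp only [sum_sub_distrib, sum_add_distrib, ← mul_sum, sum_const, card_univ,
          Fintype.card_fin, nsmul_eq_mul, hZ]
        linarith

/-- Let `H` be a triangle-free finite simple graph on vertex set
`{1, …, N}` with `m` edges, and suppose the edge set of `H` is partitioned into `k`
(possibly empty) parts `C_1, …, C_k` with total cost `Z = Σ_i cost(C_i)`. Then `H` has
a vertex cover of size at most `4k + 3Z − 3m`. -/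
theorem statement12 {N : ℕ} (H : SimpleGraph (Fin N)) [DecidableRel H.Adj]
    (htf : H.CliqueFree 3) (m : ℕ) (hm : H.edgeFinset.card = m)
    (k : ℕ) (CC : Fin k → Finset (Sym2 (Fin N)))
    (hdisj : ∀ i j, i ≠ j → Disjoint (CC i) (CC j))
    (hpart : ∀ e, e ∈ H.edgeFinset ↔ ∃ i, e ∈ CC i)
    (Z : ℝ) (hZ : Z = ∑ i, cost N (CC i)) :
    ∃ S : Finset (Fin N), _root_.IsVertexCover H ↑S ∧
      (S.card : ℝ) ≤ 4 * k + 3 * Z - 3 * m :=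
  statement12_general H htf m hm k CC hpart Z hZ
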